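/- arXiv:2510.06979 — 2 statements merged into one kernel-verified Lean document; each statement's English description precedes it below -/
import Mathlib

section
/- Let w : ℝ^{n+1} × (0,∞) → ℝ be smooth and caloric on an open set U ⊆ ℝ^{n+1} × (0,∞) with |∇w(x,t)| ≤ 1 on U, let ε > 0, and set g̃(x,t) = tanh(w(x,t)/√t). Then g̃ is a sub-solution of the ε-Allen–Cahn equation on {(x,t) ∈ U : w(x,t) > 4√t}, i.e. ∂ₜg̃ − Δg̃ + ε⁻² f(g̃) ≤ 0 there, and a super-solution on {(x,t) ∈ U : w(x,t) < −4√t}, i.e. ∂ₜg̃ − Δg̃ + ε⁻² f(g̃) ≥ 0 there, where f(u) = 2u(u²−1). -/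
open MeasureTheory Set

noncomputable section

/-- `ℝ^{n+1}` as a Euclidean space. -/
abbrev Euc (n : ℕ) := EuclideanSpace ℝ (Fin (n + 1))

/-- The spatial Laplacian: sum of second derivatives in coordinate directions. -/
def lap (n : ℕ) (f : Euc n → ℝ) (x : Euc n) : ℝ :=
  ∑ i : Fin (n + 1),
    fderiv ℝ (fun y => fderiv ℝ f y (EuclideanSpace.single i 1)) x (EuclideanSpace.single i 1)

/-- The Allen–Cahn nonlinearity `f(u) = 2u(u²-1)`, the derivative of `F(u) = ½(1-u²)²`. -/
def acF (u : ℝ) : ℝ := 2 * u * (u ^ 2 - 1)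

/-! With `v = w/√t`, `G = |∇w|²` and `T = tanh v`, the chain rule gives
`∂ₜg̃ - Δg̃ = (1 - T²)((∂ₜw - Δw)/√t + (2TG - v/2)/t)`, so for caloric `w`
`∂ₜg̃ - Δg̃ + ε⁻² f(g̃) = (1 - T²)((2TG - v/2)/t - 2ε⁻²T)`.
Where `v > 4` we have `0 < T < 1` and `G ≤ 1`, so the drift `-v/2` of the parabolic scaling beats
`2TG ≤ 2` and the reaction term `-2ε⁻²T` is negative as well; `v < -4` is the mirror image, `tanh`
being odd. -/

open Real

theorem Real.hasDerivAt_tanh (x : ℝ) : HasDerivAt tanh (1 - tanh x ^ 2) x := by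
  have h := (hasDerivAt_sinh x).div (hasDerivAt_cosh x) (cosh_pos x).ne'
  rw [show sinh / cosh = tanh from funext fun y => (tanh_eq_sinh_div_cosh y).symm] at h
  refine h.congr_deriv ?_
  rw [tanh_eq_sinh_div_cosh]
  field_simp

theorem Real.tanh_pos {x : ℝ} (hx : 0 < x) : 0 < tanh x := by
  rw [tanh_eq_sinh_div_cosh]
  exact div_pos (sinh_pos_iff.2 hx) (cosh_pos x)

theorem sum_sq_fderiv_single_eq_norm_sq_gradient {ι : Type*} [Fintype ι] [DecidableEq ι]
    (u : EuclideanSpace ℝ ι → ℝ) (x : EuclideanSpace ℝ ι) :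
    ∑ i, fderiv ℝ u x (EuclideanSpace.single i 1) ^ 2 = ‖gradient u x‖ ^ 2 := by
  have hpartial (i : ι) : fderiv ℝ u x (EuclideanSpace.single i 1) = gradient u x i := by
    rw [← toDual_gradient, InnerProductSpace.toDual_apply_apply,
      EuclideanSpace.inner_single_right, one_mul, conj_trivial]
  simp [EuclideanSpace.norm_sq_eq, hpartial]

theorem lap_comp {n : ℕ} {u : Euc n → ℝ} {x : Euc n} {φ φ' : ℝ → ℝ} {φ'' : ℝ}
    (hu : ContDiffAt ℝ 2 u x) (hφ : ∀ r, HasDerivAt φ (φ' r) r)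
    (hφ' : HasDerivAt φ' φ'' (u x)) :
    lap n (fun y => φ (u y)) x = φ' (u x) * lap n u x + φ'' * ‖gradient u x‖ ^ 2 := by
  have hdu : ∀ᶠ y in nhds x, HasFDerivAt u (fderiv ℝ u y) y :=
    (hu.eventually (by simp)).mono fun y hy => (hy.differentiableAt (by simp)).hasFDerivAt
  have hd2u : DifferentiableAt ℝ (fderiv ℝ u) x :=
    (hu.fderiv_right (m := 1) (by norm_num)).differentiableAt (by simp)
  have hφ'u : HasFDerivAt (fun y => φ' (u y)) (φ'' • fderiv ℝ u x) x :=
    hφ'.comp_hasFDerivAt x hdu.self_of_nhds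
  have partial_sq (v : Euc n) : fderiv ℝ (fun y => fderiv ℝ (fun y => φ (u y)) y v) x v
      = φ' (u x) * fderiv ℝ (fun y => fderiv ℝ u y v) x v + φ'' * fderiv ℝ u x v ^ 2 := by
    have hchain : (fun y => fderiv ℝ (fun y => φ (u y)) y v)
        =ᶠ[nhds x] fun y => φ' (u y) * fderiv ℝ u y v :=
      hdu.mono fun y hy => by
        have hφu : HasFDerivAt (fun y => φ (u y)) (φ' (u y) • fderiv ℝ u y) y :=
          (hφ (u y)).comp_hasFDerivAt y hy
        simp [hφu.fderiv]
    have hprod : HasFDerivAt (fun y => φ' (u y) * fderiv ℝ u y v)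
        (φ' (u x) • fderiv ℝ (fun y => fderiv ℝ u y v) x + fderiv ℝ u x v • φ'' • fderiv ℝ u x) x :=
      hφ'u.mul (hd2u.clm_apply (differentiableAt_const v)).hasFDerivAt
    rw [hchain.fderiv_eq, hprod.fderiv]
    simp only [add_apply, smul_apply, smul_eq_mul]
    ring
  simp only [lap, partial_sq, Finset.sum_add_distrib, ← Finset.mul_sum]
  rw [sum_sq_fderiv_single_eq_norm_sq_gradient]

theorem hasDerivAt_tanh_div (c r : ℝ) :
    HasDerivAt (fun r => tanh (r / c)) ((1 - tanh (r / c) ^ 2) / c) r := by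
  have h := (hasDerivAt_tanh (r / c)).comp r ((hasDerivAt_id' r).div_const c)
  exact h.congr_deriv (by ring)

theorem hasDerivAt_sech_sq_div (c r : ℝ) :
    HasDerivAt (fun r => (1 - tanh (r / c) ^ 2) / c)
      (-2 * tanh (r / c) * (1 - tanh (r / c) ^ 2) / c ^ 2) r := by
  have h := (((hasDerivAt_tanh_div c r).pow 2).const_sub 1).div_const c
  exact h.congr_deriv (by ring)

theorem HasDerivAt.tanh_div_sqrt {a : ℝ → ℝ} {A t : ℝ} (ha : HasDerivAt a A t) (ht : 0 < t) :
    HasDerivAt (fun s => tanh (a s / √s))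
      ((1 - tanh (a t / √t) ^ 2) * (A / √t - a t / √t / (2 * t))) t := by
  have hsqrt : 0 < √t := sqrt_pos.2 ht
  have h : HasDerivAt (fun s => tanh (a s / √s))
      ((1 - tanh (a t / √t) ^ 2) * ((A * √t - a t * (1 / (2 * √t))) / √t ^ 2)) t :=
    (hasDerivAt_tanh _).comp t (ha.div (hasDerivAt_sqrt ht.ne') hsqrt.ne')
  refine h.congr_deriv ?_
  field_simp
  rw [sq_sqrt ht.le]
  ring

theorem deriv_sub_lap_tanh_div_sqrt {n : ℕ} {w : Euc n × ℝ → ℝ} {p : Euc n × ℝ}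
    (hw : ContDiffAt ℝ 2 w p) (ht : 0 < p.2) :
    deriv (fun s => tanh (w (p.1, s) / √s)) p.2 - lap n (fun y => tanh (w (y, p.2) / √p.2)) p.1
      = (1 - tanh (w p / √p.2) ^ 2) *
        ((deriv (fun s => w (p.1, s)) p.2 - lap n (fun y => w (y, p.2)) p.1) / √p.2
          + (2 * tanh (w p / √p.2) * ‖gradient (fun y => w (y, p.2)) p.1‖ ^ 2
            - w p / √p.2 / 2) / p.2) := by
  obtain ⟨x, t⟩ := p
  have hslice_t : HasDerivAt (fun s => w (x, s)) (deriv (fun s => w (x, s)) t) t :=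
    ((hw.comp t (contDiffAt_const.prodMk contDiffAt_id)).differentiableAt (by simp)).hasDerivAt
  have hslice_x : ContDiffAt ℝ 2 (fun y => w (y, t)) x :=
    hw.comp x (contDiffAt_id.prodMk contDiffAt_const)
  rw [(hslice_t.tanh_div_sqrt ht).deriv,
    lap_comp hslice_x (hasDerivAt_tanh_div √t) (hasDerivAt_sech_sq_div √t _)]
  obtain ⟨s, hs, rfl⟩ : ∃ s, 0 < s ∧ s ^ 2 = t := ⟨√t, sqrt_pos.2 ht, sq_sqrt ht.le⟩
  rw [sqrt_sq hs.le]
  field_simp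
  ring

theorem allenCahn_tanh_div_sqrt_of_caloric {n : ℕ} {w : Euc n × ℝ → ℝ} {p : Euc n × ℝ}
    (hw : ContDiffAt ℝ 2 w p) (ht : 0 < p.2)
    (hcal : deriv (fun s => w (p.1, s)) p.2 = lap n (fun y => w (y, p.2)) p.1) (c : ℝ) :
    deriv (fun s => tanh (w (p.1, s) / √s)) p.2 - lap n (fun y => tanh (w (y, p.2) / √p.2)) p.1
        + c * acF (tanh (w p / √p.2))
      = (1 - tanh (w p / √p.2) ^ 2) *
        ((2 * tanh (w p / √p.2) * ‖gradient (fun y => w (y, p.2)) p.1‖ ^ 2 - w p / √p.2 / 2) / p.2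
          - 2 * c * tanh (w p / √p.2)) := by
  rw [deriv_sub_lap_tanh_div_sqrt hw ht, hcal, sub_self, zero_div, zero_add, acF]
  ring

theorem tanh_residual_nonpos {v G t c : ℝ} (hv : 4 < v) (hG : G ≤ 1) (ht : 0 < t) (hc : 0 ≤ c) :
    (1 - tanh v ^ 2) * ((2 * tanh v * G - v / 2) / t - 2 * c * tanh v) ≤ 0 := by
  have hT : 0 < tanh v := tanh_pos (by linarith)
  have hdrift : (2 * tanh v * G - v / 2) / t < 0 :=
    div_neg_of_neg_of_pos (by nlinarith [tanh_lt_one v]) ht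
  exact mul_nonpos_of_nonneg_of_nonpos (by nlinarith [tanh_sq_lt_one v])
    (by nlinarith [mul_nonneg hc hT.le])

theorem tanh_residual_nonneg {v G t c : ℝ} (hv : v < -4) (hG : G ≤ 1) (ht : 0 < t) (hc : 0 ≤ c) :
    0 ≤ (1 - tanh v ^ 2) * ((2 * tanh v * G - v / 2) / t - 2 * c * tanh v) := by
  have h := tanh_residual_nonpos (v := -v) (by linarith) hG ht hc
  rw [tanh_neg] at h
  linarith [show (1 - (-tanh v) ^ 2) * ((2 * -tanh v * G - -v / 2) / t - 2 * c * -tanh v)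
    = -((1 - tanh v ^ 2) * ((2 * tanh v * G - v / 2) / t - 2 * c * tanh v)) by ring]

theorem stmt5_general (n : ℕ) (w : Euc n × ℝ → ℝ) (U : Set (Euc n × ℝ))
    (hUopen : IsOpen U) (hUt : ∀ p ∈ U, 0 < p.2)
    (hsmooth : ContDiffOn ℝ ((⊤ : ℕ∞) : WithTop ℕ∞) w U)
    (hcaloric : ∀ p ∈ U, deriv (fun s => w (p.1, s)) p.2 = lap n (fun y => w (y, p.2)) p.1)
    (hgrad : ∀ p ∈ U, ‖gradient (fun y => w (y, p.2)) p.1‖ ≤ 1)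
    (ε : ℝ) :
    (∀ p ∈ U, 4 * Real.sqrt p.2 < w p →
      deriv (fun s => Real.tanh (w (p.1, s) / Real.sqrt s)) p.2
          - lap n (fun y => Real.tanh (w (y, p.2) / Real.sqrt p.2)) p.1
          + (ε ^ 2)⁻¹ * acF (Real.tanh (w p / Real.sqrt p.2)) ≤ 0) ∧
    (∀ p ∈ U, w p < -(4 * Real.sqrt p.2) →
      0 ≤ deriv (fun s => Real.tanh (w (p.1, s) / Real.sqrt s)) p.2
          - lap n (fun y => Real.tanh (w (y, p.2) / Real.sqrt p.2)) p.1
          + (ε ^ 2)⁻¹ * acF (Real.tanh (w p / Real.sqrt p.2))) := by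
  have hw (p) (hp : p ∈ U) : ContDiffAt ℝ 2 w p :=
    (hsmooth.contDiffAt (hUopen.mem_nhds hp)).of_le (WithTop.coe_le_coe.2 le_top)
  have hG (p) (hp : p ∈ U) : ‖gradient (fun y => w (y, p.2)) p.1‖ ^ 2 ≤ 1 :=
    pow_le_one₀ (norm_nonneg _) (hgrad p hp)
  have hsqrt (p) (hp : p ∈ U) : 0 < √p.2 := sqrt_pos.2 (hUt p hp)
  refine ⟨fun p hp hv => ?_, fun p hp hv => ?_⟩
  · rw [allenCahn_tanh_div_sqrt_of_caloric (hw p hp) (hUt p hp) (hcaloric p hp)]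
    exact tanh_residual_nonpos ((lt_div_iff₀ (hsqrt p hp)).2 hv) (hG p hp) (hUt p hp)
      (by positivity)
  · rw [allenCahn_tanh_div_sqrt_of_caloric (hw p hp) (hUt p hp) (hcaloric p hp)]
    exact tanh_residual_nonneg ((div_lt_iff₀ (hsqrt p hp)).2 (by linarith)) (hG p hp) (hUt p hp)
      (by positivity)

theorem stmt5 (n : ℕ) (w : Euc n × ℝ → ℝ) (U : Set (Euc n × ℝ))
    (hUopen : IsOpen U) (hUt : ∀ p ∈ U, 0 < p.2)
    (hsmooth : ContDiffOn ℝ ((⊤ : ℕ∞) : WithTop ℕ∞) w U)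
    (hcaloric : ∀ p ∈ U, deriv (fun s => w (p.1, s)) p.2 = lap n (fun y => w (y, p.2)) p.1)
    (hgrad : ∀ p ∈ U, ‖gradient (fun y => w (y, p.2)) p.1‖ ≤ 1)
    (ε : ℝ) (hε : 0 < ε) :
    (∀ p ∈ U, 4 * Real.sqrt p.2 < w p →
      deriv (fun s => Real.tanh (w (p.1, s) / Real.sqrt s)) p.2
          - lap n (fun y => Real.tanh (w (y, p.2) / Real.sqrt p.2)) p.1
          + (ε ^ 2)⁻¹ * acF (Real.tanh (w p / Real.sqrt p.2)) ≤ 0) ∧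
    (∀ p ∈ U, w p < -(4 * Real.sqrt p.2) →
      0 ≤ deriv (fun s => Real.tanh (w (p.1, s) / Real.sqrt s)) p.2
          - lap n (fun y => Real.tanh (w (y, p.2) / Real.sqrt p.2)) p.1
          + (ε ^ 2)⁻¹ * acF (Real.tanh (w p / Real.sqrt p.2))) :=
  stmt5_general n w U hUopen hUt hsmooth hcaloric hgrad ε

end
end

section
/- Let w : ℝ^{n+1} × (0,∞) → ℝ be smooth and caloric on an open set U ⊆ ℝ^{n+1} × (0,∞) with |∇w(x,t)| ≤ 1 on U, and set ψ(x,t) = t⁻¹ exp(−w(x,t)²/(6t)). Then ψ is super-caloric on {(x,t) ∈ U : w(x,t)² ≥ 18t}, i.e. ∂ₜψ − Δψ ≥ 0 there; in particular this holds on {(x,t) ∈ U : |w(x,t)| ≥ 5√t}. -/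
open MeasureTheory Set

noncomputable section

/-! Write `ψ = φ(t, w)` with `φ(t, a) = t⁻¹ exp(-a²/(6t))`. By the chain rule the terms in
`∂ₜw` and `Δw` cancel because `w` is caloric, leaving
`∂ₜψ - Δψ = φ · (a²/(6t²) - 1/t - |∇w|² (a²/(9t²) - 1/(3t)))` with `a = w`.
For `a² ≥ 3t` the last factor is nonnegative, so `|∇w| ≤ 1` bounds the bracket below by
`(a² - 12t)/(18t²)`, which is nonnegative on the region `a² ≥ 18t`; and `|w| ≥ 5√t` gives
`w² ≥ 25t`. -/

open Filter Topology InnerProductSpace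

section LaplacianChainRule

variable {n : ℕ}

theorem fderiv_apply_single_eq_gradient_apply (f : Euc n → ℝ) (x : Euc n) (i : Fin (n + 1)) :
    fderiv ℝ f x (EuclideanSpace.single i 1) = gradient f x i := by
  rw [gradient, ← toDual_symm_apply, EuclideanSpace.inner_single_right]
  simp

theorem sum_sq_fderiv_apply_single_eq_norm_gradient_sq (f : Euc n → ℝ) (x : Euc n) :
    ∑ i, fderiv ℝ f x (EuclideanSpace.single i 1) ^ 2 = ‖gradient f x‖ ^ 2 := by
  simp only [fderiv_apply_single_eq_gradient_apply, EuclideanSpace.real_norm_sq_eq]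

theorem lap_comp_s9 {f : Euc n → ℝ} {x : Euc n} {g g' : ℝ → ℝ} {g'' : ℝ}
    (hf : ContDiffAt ℝ 2 f x) (hg : ∀ a, HasDerivAt g (g' a) a)
    (hg' : HasDerivAt g' g'' (f x)) :
    lap n (fun y => g (f y)) x = g' (f x) * lap n f x + g'' * ‖gradient f x‖ ^ 2 := by
  have hf_near : ∀ᶠ y in 𝓝 x, DifferentiableAt ℝ f y :=
    (hf.eventually (by simp)).mono fun y hy => hy.differentiableAt (by norm_num)
  have hDf : ContDiffAt ℝ 1 (fderiv ℝ f) x := hf.fderiv_right le_rfl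
  rw [lap, lap, ← sum_sq_fderiv_apply_single_eq_norm_gradient_sq, Finset.mul_sum,
    Finset.mul_sum, ← Finset.sum_add_distrib]
  refine Finset.sum_congr rfl fun i _ => ?_
  set e : Euc n := EuclideanSpace.single i 1
  have hchain : ∀ y, DifferentiableAt ℝ f y →
      HasFDerivAt (fun z => g (f z)) (g' (f y) • fderiv ℝ f y) y :=
    fun y hy => (hg (f y)).comp_hasFDerivAt y hy.hasFDerivAt
  have hfirst : (fun y => fderiv ℝ (fun z => g (f z)) y e)
      =ᶠ[𝓝 x] fun y => g' (f y) * fderiv ℝ f y e := by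
    filter_upwards [hf_near] with y hy
    simp [(hchain y hy).fderiv]
  have hDfe : DifferentiableAt ℝ (fun y => fderiv ℝ f y e) x :=
    (hDf.clm_apply contDiffAt_const).differentiableAt one_ne_zero
  have hg'f : HasFDerivAt (fun y => g' (f y)) (g'' • fderiv ℝ f x) x :=
    hg'.comp_hasFDerivAt x (hf.differentiableAt two_ne_zero).hasFDerivAt
  rw [hfirst.fderiv_eq, (hg'f.fun_mul hDfe.hasFDerivAt).fderiv]
  simp only [add_apply, smul_apply, smul_eq_mul]
  ring

end LaplacianChainRule

/-- `ψ(x, t) = heatProfile t (w (x, t))`. -/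
def heatProfile (t a : ℝ) : ℝ := t⁻¹ * Real.exp (-a ^ 2 / (6 * t))

section HeatProfile

variable {t : ℝ}

theorem heatProfile_nonneg (ht : 0 ≤ t) (a : ℝ) : 0 ≤ heatProfile t a := by
  unfold heatProfile
  positivity

theorem hasDerivAt_heatProfile (ht : t ≠ 0) (a : ℝ) :
    HasDerivAt (heatProfile t) (heatProfile t a * (-a / (3 * t))) a := by
  have hexp : HasDerivAt (fun b => -b ^ 2 / (6 * t)) (-(2 * a) / (6 * t)) a := by
    simpa using (hasDerivAt_pow 2 a).neg.div_const (6 * t)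
  refine (hexp.exp.const_mul t⁻¹).congr_deriv ?_
  simp only [heatProfile]; field_simp; ring

theorem hasDerivAt_heatProfile_deriv (ht : t ≠ 0) (a : ℝ) :
    HasDerivAt (fun b => heatProfile t b * (-b / (3 * t)))
      (heatProfile t a * (a ^ 2 / (9 * t ^ 2) - 1 / (3 * t))) a := by
  refine ((hasDerivAt_heatProfile ht a).fun_mul
    ((hasDerivAt_id' a).fun_neg.div_const (3 * t))).congr_deriv ?_
  field_simp; ring

theorem hasDerivAt_heatProfile_comp_time {u : ℝ → ℝ} {u' : ℝ} (ht : t ≠ 0)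
    (hu : HasDerivAt u u' t) :
    HasDerivAt (fun s => heatProfile s (u s))
      (heatProfile t (u t) * (u t ^ 2 / (6 * t ^ 2) - 1 / t - u t * u' / (3 * t))) t := by
  refine ((hasDerivAt_inv ht).fun_mul
    (((hu.fun_pow 2).fun_neg.fun_div ((hasDerivAt_id' t).const_mul 6)
      (by simpa using ht)).exp)).congr_deriv ?_
  simp only [heatProfile]; field_simp; ring

theorem heat_bracket_nonneg {a S : ℝ} (ht : 0 < t) (hS : S ≤ 1)
    (ha : 12 * t ≤ a ^ 2) :
    0 ≤ a ^ 2 / (6 * t ^ 2) - 1 / t - S * (a ^ 2 / (9 * t ^ 2) - 1 / (3 * t)) := by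
  have key : a ^ 2 / (6 * t ^ 2) - 1 / t - S * (a ^ 2 / (9 * t ^ 2) - 1 / (3 * t))
      = ((1 - S) * (a ^ 2 / 9 - t / 3) + (a ^ 2 / 18 - 2 * t / 3)) / t ^ 2 := by
    field_simp; ring
  rw [key]
  apply div_nonneg _ (by positivity)
  nlinarith

variable {n : ℕ}

theorem heatProfile_superCaloric_at {f : Euc n → ℝ} {u : ℝ → ℝ} {x : Euc n} {u' : ℝ}
    (ht : 0 < t) (hf : ContDiffAt ℝ 2 f x) (hu : HasDerivAt u u' t) (hfu : u t = f x)
    (hcal : u' = lap n f x) (hgrad : ‖gradient f x‖ ≤ 1) (hlarge : 12 * t ≤ f x ^ 2) :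
    0 ≤ deriv (fun s => heatProfile s (u s)) t - lap n (fun y => heatProfile t (f y)) x := by
  rw [(hasDerivAt_heatProfile_comp_time ht.ne' hu).deriv,
    lap_comp_s9 hf (hasDerivAt_heatProfile ht.ne') (hasDerivAt_heatProfile_deriv ht.ne' (f x)),
    hfu, ← hcal]
  have hS : ‖gradient f x‖ ^ 2 ≤ 1 := pow_le_one₀ (norm_nonneg _) hgrad
  calc (0 : ℝ)
      ≤ heatProfile t (f x) * (f x ^ 2 / (6 * t ^ 2) - 1 / t
          - ‖gradient f x‖ ^ 2 * (f x ^ 2 / (9 * t ^ 2) - 1 / (3 * t))) :=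
        mul_nonneg (heatProfile_nonneg ht.le _) (heat_bracket_nonneg ht hS hlarge)
    _ = _ := by ring

end HeatProfile

theorem sq_mul_le_sq_of_mul_sqrt_le_abs {a c t : ℝ} (hc : 0 ≤ c) (ht : 0 ≤ t)
    (h : c * Real.sqrt t ≤ |a|) : c ^ 2 * t ≤ a ^ 2 := by
  calc c ^ 2 * t = (c * Real.sqrt t) ^ 2 := by rw [mul_pow, Real.sq_sqrt ht]
    _ ≤ |a| ^ 2 := pow_le_pow_left₀ (by positivity) h 2
    _ = a ^ 2 := sq_abs a

theorem stmt9 (n : ℕ) (w : Euc n × ℝ → ℝ) (U : Set (Euc n × ℝ))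
    (hUopen : IsOpen U) (hUt : ∀ p ∈ U, 0 < p.2)
    (hsmooth : ContDiffOn ℝ ((⊤ : ℕ∞) : WithTop ℕ∞) w U)
    (hcaloric : ∀ p ∈ U, deriv (fun s => w (p.1, s)) p.2 = lap n (fun y => w (y, p.2)) p.1)
    (hgrad : ∀ p ∈ U, ‖gradient (fun y => w (y, p.2)) p.1‖ ≤ 1) :
    (∀ p ∈ U, 18 * p.2 ≤ (w p) ^ 2 →
      0 ≤ deriv (fun s => s⁻¹ * Real.exp (-(w (p.1, s)) ^ 2 / (6 * s))) p.2
          - lap n (fun y => p.2⁻¹ * Real.exp (-(w (y, p.2)) ^ 2 / (6 * p.2))) p.1) ∧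
    (∀ p ∈ U, 5 * Real.sqrt p.2 ≤ |w p| →
      0 ≤ deriv (fun s => s⁻¹ * Real.exp (-(w (p.1, s)) ^ 2 / (6 * s))) p.2
          - lap n (fun y => p.2⁻¹ * Real.exp (-(w (y, p.2)) ^ 2 / (6 * p.2))) p.1) := by
  have key : ∀ p ∈ U, 18 * p.2 ≤ (w p) ^ 2 →
      0 ≤ deriv (fun s => heatProfile s (w (p.1, s))) p.2
          - lap n (fun y => heatProfile p.2 (w (y, p.2))) p.1 := by
    rintro ⟨x, t⟩ hp hlarge
    have ht : 0 < t := hUt _ hp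
    have hw : ContDiffAt ℝ 2 w (x, t) :=
      (hsmooth.contDiffAt (hUopen.mem_nhds hp)).of_le (WithTop.coe_le_coe.mpr le_top)
    have hspace : ContDiffAt ℝ 2 (fun y => w (y, t)) x :=
      hw.comp x (contDiffAt_id.prodMk contDiffAt_const)
    have htime : DifferentiableAt ℝ (fun s => w (x, s)) t :=
      (hw.comp t (contDiffAt_const.prodMk contDiffAt_id)).differentiableAt two_ne_zero
    exact heatProfile_superCaloric_at ht hspace htime.hasDerivAt rfl (hcaloric _ hp)
      (hgrad _ hp) (by dsimp only at hlarge; linarith)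
  refine ⟨key, fun p hp h => key p hp ?_⟩
  have := sq_mul_le_sq_of_mul_sqrt_le_abs (by norm_num) (hUt p hp).le h
  linarith [(hUt p hp).le]

end
end
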